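/- For vectors u, v ∈ ℝ², the outer product v ⊗ v equals M(u₁, u₂, √(u₁²+u₂²)) if and only if v² = u, where v² denotes the square of v viewed as a complex number. -/
import Mathlib


open Matrix

/-- `M a b c = (1/2)·[[c+a, b],[b, c−a]]`. -/
noncomputable def Mmat (a b c : ℝ) : Matrix (Fin 2) (Fin 2) ℝ :=
  (1/2 : ℝ) • !![c + a, b; b, c - a]

/-- Outer product `v ⊗ v = v vᵀ` for `v ∈ ℝ²` written as a pair. -/
def outerSq (v : ℝ × ℝ) : Matrix (Fin 2) (Fin 2) ℝ :=
  !![v.1 * v.1, v.1 * v.2; v.2 * v.1, v.2 * v.2]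

/-- The complex square of a vector in `ℝ² ≅ ℂ`. -/
def cSq (v : ℝ × ℝ) : ℝ × ℝ := (v.1 ^ 2 - v.2 ^ 2, 2 * v.1 * v.2)

theorem stmt_1 (u v : ℝ × ℝ) :
    outerSq v = Mmat u.1 u.2 (Real.sqrt (u.1 ^ 2 + u.2 ^ 2)) ↔ cSq v = u := by
  constructor
  · intro h
    have h00 := congrFun (congrFun h 0) 0
    have h01 := congrFun (congrFun h 0) 1
    have h11 := congrFun (congrFun h 1) 1
    simp [outerSq, Mmat] at h00 h01 h11
    have : cSq v = (v.1 ^ 2 - v.2 ^ 2, 2 * v.1 * v.2) := rfl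
    rw [this, Prod.ext_iff]
    constructor <;> simp <;> nlinarith [h00, h01, h11]
  · intro h
    have hu1 : u.1 = v.1 ^ 2 - v.2 ^ 2 := by rw [← h]; rfl
    have hu2 : u.2 = 2 * v.1 * v.2 := by rw [← h]; rfl
    have hs : Real.sqrt (u.1 ^ 2 + u.2 ^ 2) = v.1 ^ 2 + v.2 ^ 2 := by
      rw [hu1, hu2]
      have : (v.1 ^ 2 - v.2 ^ 2) ^ 2 + (2 * v.1 * v.2) ^ 2 = (v.1 ^ 2 + v.2 ^ 2) ^ 2 := by ring
      rw [this, Real.sqrt_sq (by positivity)]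
    ext i j
    fin_cases i <;> fin_cases j <;>
      (simp [outerSq, Mmat, hs]; nlinarith [hu1, hu2])
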